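/- arXiv:0903.2000 — 2 statements merged into one kernel-verified Lean document; each statement's English description precedes it below -/
import Mathlib

section
/- Let V and E be finite types with maps s, r : E → V and adjacency matrix A. Then the circuit configurations D whose induced permutation ρ_D is the identity permutation of V are exactly the finsets D of loop edges (edges e with s e = r e) whose base vertices are pairwise distinct, each such D satisfies c(D) = D.card, and consequently ∏_{v ∈ V} (1 − A v v) = Σ_D (−1)^{D.card}, the sum ranging over all finsets D of loop edges with pairwise distinct base vertices. -/
open scoped Classical

/-- The adjacency matrix of the finite directed multigraph with vertices `V`, edges `E`,
source map `s` and range map `r`: the `(v, w)` entry is the number of edges from `v` to `w`. -/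
noncomputable def adjMatrix {V E : Type*} (s r : E → V) : Matrix V V ℤ :=
  Matrix.of fun v w => (Nat.card {e : E // s e = v ∧ r e = w} : ℤ)

/-- A circuit configuration: a finset of edges on which `s` and `r` are injective and
whose `s`-image equals its `r`-image.  Such finsets are precisely the unions of the
circuits of vertex-disjoint sets of directed circuits. -/
def IsCircuitConfig {V E : Type*} [DecidableEq V] (s r : E → V) (D : Finset E) : Prop :=
  Set.InjOn s ↑D ∧ Set.InjOn r ↑D ∧ D.image s = D.image r

/-- `ρ` is the permutation induced by the finset of edges `D`: it sends `s e` to `r e`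
for each `e ∈ D` and fixes every vertex outside the `s`-image of `D`. -/
def Induces {V E : Type*} [DecidableEq V] (s r : E → V) (D : Finset E)
    (ρ : Equiv.Perm V) : Prop :=
  (∀ e ∈ D, ρ (s e) = r e) ∧ ∀ v ∉ D.image s, ρ v = v

/-- The permutation induced by a circuit configuration `D` (the identity if no
permutation is induced by `D`). -/
noncomputable def inducedPerm {V E : Type*} [DecidableEq V] (s r : E → V)
    (D : Finset E) : Equiv.Perm V :=
  if h : ∃ ρ : Equiv.Perm V, Induces s r D ρ then h.choose else 1

/-- The setoid on `V` whose classes are the orbits of the permutation `ρ`. -/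
def sameCycleSetoid {V : Type*} (ρ : Equiv.Perm V) : Setoid V where
  r := ρ.SameCycle
  iseqv := ⟨fun x => Equiv.Perm.SameCycle.refl ρ x,
    Equiv.Perm.SameCycle.symm, Equiv.Perm.SameCycle.trans⟩

/-- The number of circuits of a configuration `D` with induced permutation `ρ`:
the number of orbits of `ρ` that meet the `s`-image of `D`. -/
noncomputable def numCircuits {V E : Type*} (s : E → V) (D : Finset E)
    (ρ : Equiv.Perm V) : ℕ :=
  (Quotient.mk (sameCycleSetoid ρ) '' (s '' ↑D)).ncard

/-!
A permutation induced by `D` is the identity exactly when every edge of `D` is a loop, and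
the orbits of the identity are single vertices, so `c(D) = |s(D)| = |D|`. Expanding
`∏ v, (1 - A v v)` means choosing at every vertex either `1` or `-1` for one of its loops;
such a choice is the same thing as a finset of loops with distinct base vertices.
-/

section CircuitConfig

variable {V E : Type*} {s r : E → V} {D : Finset E}

section Induces

variable [DecidableEq V]

theorem Induces.unique {ρ σ : Equiv.Perm V} (hρ : Induces s r D ρ) (hσ : Induces s r D σ) :
    ρ = σ := by
  ext v
  by_cases hv : v ∈ D.image s
  · obtain ⟨e, he, rfl⟩ := Finset.mem_image.1 hv
    rw [hρ.1 e he, hσ.1 e he]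
  · rw [hρ.2 v hv, hσ.2 v hv]

theorem induces_one_iff : Induces s r D 1 ↔ ∀ e ∈ D, s e = r e := by
  simp [Induces, eq_comm]

theorem inducedPerm_eq_of_induces {ρ : Equiv.Perm V} (h : Induces s r D ρ) :
    inducedPerm s r D = ρ := by
  have hex : ∃ ρ, Induces s r D ρ := ⟨ρ, h⟩
  rw [inducedPerm, dif_pos hex]
  exact hex.choose_spec.unique h

/-- On the `s`-image of `D` the induced permutation is `r ∘ (s|_D)⁻¹`. -/
theorem IsCircuitConfig.exists_induces (h : IsCircuitConfig s r D) :
    ∃ ρ : Equiv.Perm V, Induces s r D ρ := by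
  obtain ⟨hs, hr, him⟩ := h
  have himage : r '' D = s '' D := by exact_mod_cast him.symm
  let σ : Equiv.Perm (s '' D) := (Equiv.Set.imageOfInjOn s _ hs).symm.trans
    ((Equiv.Set.imageOfInjOn r _ hr).trans (Equiv.setCongr himage))
  refine ⟨Equiv.Perm.ofSubtype σ, fun e he => ?_, fun v hv => ?_⟩
  · have hse : s e ∈ s '' D := Set.mem_image_of_mem s he
    rw [Equiv.Perm.ofSubtype_apply_of_mem σ hse]
    have : (Equiv.Set.imageOfInjOn s _ hs).symm ⟨s e, hse⟩ = ⟨e, he⟩ :=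
      (Equiv.symm_apply_eq _).2 rfl
    simp only [σ, Equiv.trans_apply, this]
    rfl
  · exact Equiv.Perm.ofSubtype_apply_of_not_mem σ (by simpa using hv)

theorem isCircuitConfig_of_loops (hloop : ∀ e ∈ D, s e = r e) (hs : Set.InjOn s D) :
    IsCircuitConfig s r D :=
  ⟨hs, hs.congr fun e he => hloop e he, Finset.image_congr fun e he => hloop e he⟩

theorem isCircuitConfig_and_inducedPerm_eq_one_iff :
    (IsCircuitConfig s r D ∧ inducedPerm s r D = 1) ↔
      (∀ e ∈ D, s e = r e) ∧ Set.InjOn s D := by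
  constructor
  · rintro ⟨hD, hone⟩
    obtain ⟨ρ, hρ⟩ := hD.exists_induces
    rw [inducedPerm_eq_of_induces hρ] at hone
    exact ⟨induces_one_iff.1 (hone ▸ hρ), hD.1⟩
  · rintro ⟨hloop, hs⟩
    exact ⟨isCircuitConfig_of_loops hloop hs,
      inducedPerm_eq_of_induces (induces_one_iff.2 hloop)⟩

end Induces

theorem numCircuits_one (hs : Set.InjOn s D) : numCircuits s D 1 = D.card := by
  have hmk : Function.Injective (Quotient.mk (sameCycleSetoid (1 : Equiv.Perm V))) :=
    fun _ _ h => Equiv.Perm.sameCycle_one.1 (Quotient.exact h)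
  rw [numCircuits, hmk.injOn.ncard_image, hs.ncard_image, Set.ncard_coe_finset]

section LoopSelection

variable [Fintype E]

variable (s r) in
noncomputable def chosenLoops (p : ∀ v : V, Option {e : E // s e = v ∧ r e = v}) : Finset E :=
  Finset.univ.filter fun e => (p (s e)).map Subtype.val = some e

variable (s r) in
noncomputable def loopChoice (D : Finset E) (v : V) : Option {e : E // s e = v ∧ r e = v} :=
  if h : ∃ e ∈ D, s e = v ∧ r e = v then some ⟨h.choose, h.choose_spec.2⟩ else none

variable {p : ∀ v : V, Option {e : E // s e = v ∧ r e = v}}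

theorem mem_chosenLoops {e : E} :
    e ∈ chosenLoops s r p ↔ (p (s e)).map Subtype.val = some e := by
  simp [chosenLoops]

theorem val_mem_chosenLoops {v : V} {x : {e : E // s e = v ∧ r e = v}} (hx : p v = some x) :
    x.1 ∈ chosenLoops s r p := by
  rw [mem_chosenLoops, x.2.1, hx, Option.map_some]

theorem isLoop_of_mem_chosenLoops {e : E} (he : e ∈ chosenLoops s r p) : s e = r e := by
  obtain ⟨x, -, hxe⟩ := Option.map_eq_some_iff.1 (mem_chosenLoops.1 he)
  have hx := x.2
  rw [hxe] at hx
  exact hx.2.symm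

theorem injOn_chosenLoops : Set.InjOn s (chosenLoops s r p) := by
  intro e he e' he' hee'
  have h := mem_chosenLoops.1 he
  rw [hee', mem_chosenLoops.1 he'] at h
  exact (Option.some_injective E h).symm

theorem card_chosenLoops [Fintype V] :
    (chosenLoops s r p).card = (Finset.univ.filter fun v => (p v).isSome).card := by
  refine Finset.card_nbij s (fun e he => ?_) injOn_chosenLoops (fun v hv => ?_)
  · obtain ⟨x, hx, -⟩ := Option.map_eq_some_iff.1 (mem_chosenLoops.1 he)
    simp [hx]
  · obtain ⟨x, hx⟩ := Option.isSome_iff_exists.1 (Finset.mem_filter.1 hv).2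
    exact ⟨x.1, val_mem_chosenLoops hx, x.2.1⟩

theorem loopChoice_chosenLoops : loopChoice s r (chosenLoops s r p) = p := by
  funext v
  rcases hpv : p v with _ | x
  · refine dif_neg ?_
    rintro ⟨e, he, hse, -⟩
    have h := mem_chosenLoops.1 he
    rw [hse, hpv, Option.map_none] at h
    exact Option.some_ne_none e h.symm
  · have h : ∃ e ∈ chosenLoops s r p, s e = v ∧ r e = v := ⟨x, val_mem_chosenLoops hpv, x.2⟩
    rw [loopChoice, dif_pos h, Option.some_inj, Subtype.ext_iff]
    have hchoose := mem_chosenLoops.1 h.choose_spec.1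
    rw [h.choose_spec.2.1, hpv, Option.map_some] at hchoose
    exact (Option.some_injective E hchoose).symm

theorem chosenLoops_loopChoice (hloop : ∀ e ∈ D, s e = r e) (hs : Set.InjOn s D) :
    chosenLoops s r (loopChoice s r D) = D := by
  ext e
  rw [mem_chosenLoops]
  constructor
  · intro he
    obtain ⟨x, hx, hxe⟩ := Option.map_eq_some_iff.1 he
    rw [loopChoice] at hx
    split_ifs at hx with h
    have hxD : x.1 ∈ D := by
      rw [← Option.some_inj.1 hx]
      exact h.choose_spec.1
    exact hxe ▸ hxD
  · intro he
    have h : ∃ e' ∈ D, s e' = s e ∧ r e' = s e := ⟨e, he, rfl, (hloop e he).symm⟩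
    rw [loopChoice, dif_pos h, Option.map_some, Option.some_inj]
    exact hs h.choose_spec.1 he h.choose_spec.2.1

end LoopSelection

theorem sum_option_ite_isSome (α : Type*) [Fintype α] :
    ∑ o : Option α, (if o.isSome then (-1 : ℤ) else 1) = 1 - Fintype.card α := by
  simp [Fintype.sum_option, sub_eq_add_neg]

theorem adjMatrix_apply_self [Fintype E] [DecidableEq V] (v : V) :
    adjMatrix s r v v = Fintype.card {e : E // s e = v ∧ r e = v} := by
  simp [adjMatrix, Nat.card_eq_fintype_card]

theorem prod_one_sub_adjMatrix_diag [Fintype V] [Fintype E] [DecidableEq V] :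
    ∏ v : V, (1 - adjMatrix s r v v) =
      ∑ D ∈ Finset.univ.filter
          (fun D : Finset E => (∀ e ∈ D, s e = r e) ∧ Set.InjOn s ↑D),
        (-1 : ℤ) ^ D.card := by
  simp_rw [adjMatrix_apply_self, ← sum_option_ite_isSome, Fintype.prod_sum]
  refine Finset.sum_nbij' (chosenLoops s r) (loopChoice s r) (fun p _ => ?_)
    (fun _ _ => Finset.mem_univ _) (fun p _ => loopChoice_chosenLoops)
    (fun D hD => ?_) (fun p _ => ?_)
  · exact Finset.mem_filter.2 ⟨Finset.mem_univ _,
      fun e he => isLoop_of_mem_chosenLoops he, injOn_chosenLoops⟩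
  · obtain ⟨-, hloop, hs⟩ := Finset.mem_filter.1 hD
    exact chosenLoops_loopChoice hloop hs
  · rw [Finset.prod_ite, Finset.prod_const, Finset.prod_const, one_pow, mul_one,
      card_chosenLoops]

end CircuitConfig

/-- The circuit configurations inducing the identity permutation are exactly the finsets
of loop edges with pairwise distinct base vertices; each such configuration `D` has
`c(D) = D.card` circuits; and consequently `∏ v, (1 - A v v)` equals the signed count
`∑ D, (-1) ^ D.card` over all finsets `D` of loop edges with pairwise distinct base
vertices. -/
theorem identity_perm_circuit_configs {V E : Type*} [Fintype V] [Fintype E] [DecidableEq V]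
    (s r : E → V) :
    (∀ D : Finset E,
        (IsCircuitConfig s r D ∧ inducedPerm s r D = 1) ↔
          ((∀ e ∈ D, s e = r e) ∧ Set.InjOn s ↑D)) ∧
    (∀ D : Finset E, (∀ e ∈ D, s e = r e) → Set.InjOn s ↑D →
        numCircuits s D (inducedPerm s r D) = D.card) ∧
    (∏ v : V, (1 - adjMatrix s r v v) =
      ∑ D ∈ Finset.univ.filter
          (fun D : Finset E => (∀ e ∈ D, s e = r e) ∧ Set.InjOn s ↑D),
        (-1 : ℤ) ^ D.card) := by
  refine ⟨fun D => isCircuitConfig_and_inducedPerm_eq_one_iff, fun D hloop hs => ?_,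
    prod_one_sub_adjMatrix_diag⟩
  rw [inducedPerm_eq_of_induces (induces_one_iff.2 hloop), numCircuits_one hs]
end

section
/- (Corollary.) Let V and E be finite types with maps s, r : E → V and adjacency matrix A, and let v ∈ V be a source (no edge e has r e = v) or a sink (no edge e has s e = v). Let V' = {w ∈ V | w ≠ v}, let E' = {e ∈ E | s e ≠ v and r e ≠ v}, and let A' be the adjacency matrix of the graph (V', E') with the restricted source and range maps. Then the Parry–Sullivan numbers agree: det(1 − A) = det(1 − A'). -/
open scoped Classical

/-!
If `v` is a sink, the row of `1 - A` at `v` is the unit vector at `v` (there are no edges out of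
`v`, in particular no loop), so `det (1 - A)` is the principal minor obtained by deleting `v`;
that minor is `1 - A'`, since the edges between vertices other than `v` are exactly the edges
avoiding `v`. For a source, argue with the column at `v` instead.
-/

namespace Matrix

variable {n R : Type*} [Fintype n] [DecidableEq n] [CommRing R]

theorem det_eq_mul_det_submatrix_ne (M : Matrix n n R) (i : n)
    (h : (∀ j ≠ i, M i j = 0) ∨ (∀ j ≠ i, M j i = 0)) :
    M.det = M i i * (M.submatrix ((↑) : {j // j ≠ i} → n) (↑)).det := by
  have hii : (M.toSquareBlockProp fun j => ¬j ≠ i).det = M i i :=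
    (equiv_block_det M (q := fun j => id j = i) fun _ => not_not.symm).trans
      (det_toSquareBlock_id M i)
  rw [mul_comm, ← hii]
  rcases h with hrow | hcol
  · exact M.twoBlockTriangular_det (· ≠ i) fun j hj k hk => not_not.mp hj ▸ hrow k hk
  · exact M.twoBlockTriangular_det' (· ≠ i) fun j hj k hk => not_not.mp hk ▸ hcol j hj

end Matrix

section adjMatrix

variable {V E : Type*}

theorem adjMatrix_apply_eq_zero {s r : E → V} {v w : V} (h : ∀ e, s e = v → r e ≠ w) :
    adjMatrix s r v w = 0 := by
  rw [adjMatrix, Matrix.of_apply, Nat.cast_eq_zero, Nat.card_eq_zero]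
  exact Or.inl ⟨fun e => h e.1 e.2.1 e.2.2⟩

theorem adjMatrix_submatrix_val (s r : E → V) (p : V → Prop) :
    (adjMatrix s r).submatrix ((↑) : Subtype p → V) (↑) =
      adjMatrix (fun e : {e // p (s e) ∧ p (r e)} => (⟨s e.1, e.2.1⟩ : Subtype p))
        (fun e => ⟨r e.1, e.2.2⟩) := by
  ext w w'
  simp only [adjMatrix, Matrix.submatrix_apply, Matrix.of_apply, Subtype.ext_iff]
  exact congrArg _ (Nat.card_congr (Equiv.subtypeSubtypeEquivSubtype
    fun {e} he => ⟨he.1 ▸ w.2, he.2 ▸ w'.2⟩).symm)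

end adjMatrix

theorem parry_sullivan_delete_source_or_sink_general {V E : Type*} [Fintype V]
    [DecidableEq V] (s r : E → V) (v : V)
    (hv : (∀ e : E, r e ≠ v) ∨ (∀ e : E, s e ≠ v)) :
    Matrix.det ((1 : Matrix V V ℤ) - adjMatrix s r) =
      Matrix.det ((1 : Matrix {w : V // w ≠ v} {w : V // w ≠ v} ℤ) -
        adjMatrix (fun e : {e : E // s e ≠ v ∧ r e ≠ v} =>
            (⟨s e.1, e.2.1⟩ : {w : V // w ≠ v}))
          (fun e : {e : E // s e ≠ v ∧ r e ≠ v} =>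
            (⟨r e.1, e.2.2⟩ : {w : V // w ≠ v}))) := by
  have hloop : adjMatrix s r v v = 0 :=
    adjMatrix_apply_eq_zero fun e hs hr => hv.elim (· e hr) (· e hs)
  rw [Matrix.det_eq_mul_det_submatrix_ne _ v, Matrix.sub_apply, Matrix.one_apply_eq, hloop,
    sub_zero, one_mul, ← adjMatrix_submatrix_val s r (· ≠ v),
    ← Matrix.submatrix_one _ Subtype.val_injective]
  · rfl
  refine hv.symm.imp (fun hsink w hw => ?_) (fun hsource w hw => ?_)
  · rw [Matrix.sub_apply, Matrix.one_apply_ne hw.symm,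
      adjMatrix_apply_eq_zero fun e hs _ => hsink e hs, sub_zero]
  · rw [Matrix.sub_apply, Matrix.one_apply_ne hw,
      adjMatrix_apply_eq_zero fun e _ hr => hsource e hr, sub_zero]

/-- Corollary: deleting a source or sink vertex `v` (together with its adjacent edges)
does not change the Parry–Sullivan number `det (1 - A)`. -/
theorem parry_sullivan_delete_source_or_sink {V E : Type*} [Fintype V] [Fintype E]
    [DecidableEq V] (s r : E → V) (v : V)
    (hv : (∀ e : E, r e ≠ v) ∨ (∀ e : E, s e ≠ v)) :
    Matrix.det ((1 : Matrix V V ℤ) - adjMatrix s r) =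
      Matrix.det ((1 : Matrix {w : V // w ≠ v} {w : V // w ≠ v} ℤ) -
        adjMatrix (fun e : {e : E // s e ≠ v ∧ r e ≠ v} =>
            (⟨s e.1, e.2.1⟩ : {w : V // w ≠ v}))
          (fun e : {e : E // s e ≠ v ∧ r e ≠ v} =>
            (⟨r e.1, e.2.2⟩ : {w : V // w ≠ v}))) :=
  parry_sullivan_delete_source_or_sink_general s r v hv
end
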